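/- Let K be a complete nonarchimedean field and Q, H ∈ K{{T}} entire power series (i.e. converging on all of K) with Q a polynomial of degree n with invertible leading coefficient and constant term 1. If the resultant Res(Q̃, H) is nonzero, where Q̃ is the monic normalization of the reversed polynomial, then Q and H generate the unit ideal in K{{T}}: there exist entire series f, g with fQ + gH = 1. -/

import Mathlib

open PowerSeries Filter Topology

/-- A power series is entire if its coefficients `c_n` satisfy `‖c_n‖ r^n → 0` for every
radius `r`, i.e. it converges on all of `ℂ_p`. -/
def IsEntirePS {K : Type*} [NormedField K] (f : PowerSeries K) : Prop :=
  ∀ r : ℝ, 0 < r → Tendsto (fun n => ‖PowerSeries.coeff (R := K) n f‖ * r ^ n) atTop (𝓝 0)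

/-!
Entire series form a subring of `K⟦X⟧`, and the claim is that the image of `Q` is coprime to `H`
there. Over an algebraically closed field `Q` is a unit times a product of factors `X - α`, and
coprimality is multiplicative, so it suffices to treat one factor `X - α` with `H(α) ≠ 0`. For it
the remainder theorem gives `H - H(α) = (X - α) G` with `G = ∑ₙ (∑ₖ c_{n+1+k} αᵏ) Xⁿ`; by the
ultrametric inequality these tails decay as fast as the coefficients `cₘ` of `H`, so `G` is entire,
and `H(α)⁻¹ H - H(α)⁻¹ G (X - α) = 1`.
-/

lemma tendsto_nhds_zero_of_forall_eventually_le {α : Type*} {l : Filter α} {u : α → ℝ}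
    (h0 : ∀ a, 0 ≤ u a) (h : ∀ ε > 0, ∀ᶠ a in l, u a ≤ ε) : Tendsto u l (𝓝 0) :=
  tendsto_order.2 ⟨fun _ hε => Eventually.of_forall fun a => hε.trans_le (h0 a),
    fun ε hε => (h (ε / 2) (half_pos hε)).mono fun _ ha => ha.trans_lt (half_lt_self hε)⟩

lemma eventually_forall_antidiagonal_mul_le {a b : ℕ → ℝ} (hb0 : ∀ n, 0 ≤ b n)
    (ha : Tendsto a atTop (𝓝 0)) (hb : Tendsto b atTop (𝓝 0))
    {ε : ℝ} (hε : 0 < ε) :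
    ∀ᶠ n in atTop, ∀ i j, i + j = n → a i * b j ≤ ε := by
  obtain ⟨A, hA⟩ := ha.bddAbove_range
  obtain ⟨B, hB⟩ := hb.bddAbove_range
  set M := max (max A B) 1
  have hM : 0 < M := lt_max_of_lt_right one_pos
  have haM : ∀ i, a i ≤ M := fun i => (hA ⟨i, rfl⟩).trans (le_max_of_le_left (le_max_left _ _))
  have hbM : ∀ j, b j ≤ M := fun j => (hB ⟨j, rfl⟩).trans (le_max_of_le_left (le_max_right _ _))
  obtain ⟨N, hN⟩ := ((ha.eventually_le_const (div_pos hε hM)).and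
    (hb.eventually_le_const (div_pos hε hM))).exists_forall_of_atTop
  filter_upwards [eventually_ge_atTop (2 * N)] with n hn i j hij
  rcases le_total N i with hi | hi
  · calc a i * b j ≤ ε / M * M := mul_le_mul (hN i hi).1 (hbM j) (hb0 j) (div_pos hε hM).le
      _ = ε := div_mul_cancel₀ ε hM.ne'
  · calc a i * b j ≤ M * (ε / M) := mul_le_mul (haM i) (hN j (by omega)).2 (hb0 j) hM.le
      _ = ε := mul_div_cancel₀ ε hM.ne'

section

variable {K : Type*} [NormedField K] {f g : PowerSeries K}

lemma isEntirePS_coe (p : Polynomial K) : IsEntirePS (p : PowerSeries K) := by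
  intro r _
  refine tendsto_const_nhds.congr' ?_
  filter_upwards [eventually_gt_atTop p.natDegree] with n hn
  rw [Polynomial.coeff_coe, Polynomial.coeff_eq_zero_of_natDegree_lt hn, norm_zero, zero_mul]

lemma IsEntirePS.add (hf : IsEntirePS f) (hg : IsEntirePS g) : IsEntirePS (f + g) := by
  intro r hr
  refine squeeze_zero (fun n => by positivity) (fun n => ?_)
    (by simpa using (hf r hr).add (hg r hr))
  rw [map_add, ← add_mul]
  exact mul_le_mul_of_nonneg_right (norm_add_le _ _) (by positivity)

lemma IsEntirePS.neg (hf : IsEntirePS f) : IsEntirePS (-f) := by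
  simpa [IsEntirePS] using hf

lemma IsEntirePS.mul [IsUltrametricDist K] (hf : IsEntirePS f) (hg : IsEntirePS g) :
    IsEntirePS (f * g) := by
  intro r hr
  refine tendsto_nhds_zero_of_forall_eventually_le (fun n => by positivity) fun ε hε => ?_
  filter_upwards [eventually_forall_antidiagonal_mul_le (fun _ => by positivity) (hf r hr)
    (hg r hr) hε] with n hn
  rw [coeff_mul, ← le_div_iff₀ (by positivity)]
  refine IsUltrametricDist.norm_sum_le_of_forall_le_of_nonneg (by positivity) fun ⟨i, j⟩ hij => ?_
  rw [Finset.HasAntidiagonal.mem_antidiagonal] at hij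
  rw [le_div_iff₀ (by positivity), norm_mul, ← hij, pow_add]
  linarith [hn i j hij]

lemma IsEntirePS.tendsto_norm_coeff_add_mul_pow (hf : IsEntirePS f) (n : ℕ) {s : ℝ}
    (hs : 0 ≤ s) :
    Tendsto (fun k => ‖coeff (n + k) f‖ * s ^ k) atTop (𝓝 0) := by
  set t := max s 1
  have ht : 1 ≤ t := le_max_right _ _
  have hlim := (hf t (zero_lt_one.trans_le ht)).comp (tendsto_add_atTop_nat n)
  simp only [Function.comp_def, add_comm _ n] at hlim
  refine squeeze_zero (fun k => by positivity) (fun k => ?_) hlim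
  calc ‖coeff (n + k) f‖ * s ^ k ≤ ‖coeff (n + k) f‖ * t ^ k := by gcongr; exact le_max_left _ _
    _ ≤ ‖coeff (n + k) f‖ * t ^ (n + k) := by gcongr; omega

variable (K) in
def entireSeries [IsUltrametricDist K] : Subring (PowerSeries K) where
  carrier := {f | IsEntirePS f}
  mul_mem' := IsEntirePS.mul
  one_mem' := by simpa using isEntirePS_coe (1 : Polynomial K)
  add_mem' := IsEntirePS.add
  zero_mem' := by simpa using isEntirePS_coe (0 : Polynomial K)
  neg_mem' := IsEntirePS.neg

noncomputable def Polynomial.toEntireSeries [IsUltrametricDist K] :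
    Polynomial K →+* entireSeries K :=
  Polynomial.coeToPowerSeries.ringHom.codRestrict _ isEntirePS_coe

@[simp]
lemma Polynomial.coe_toEntireSeries [IsUltrametricDist K] (p : Polynomial K) :
    (p.toEntireSeries : PowerSeries K) = p := rfl

end

section Tail

variable {K : Type*} [NormedField K] [IsUltrametricDist K] {F : PowerSeries K}

noncomputable def tailSum (F : PowerSeries K) (α : K) (n : ℕ) : K :=
  ∑' k, coeff (n + k) F * α ^ k

lemma norm_tailSum_mul_pow_le {α : K} {s ε : ℝ} {n : ℕ} (hs : 0 < s) (hαs : ‖α‖ ≤ s)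
    (hbound : ∀ m ≥ n, ‖coeff m F‖ * s ^ m ≤ ε) : ‖tailSum F α n‖ * s ^ n ≤ ε := by
  have hε : 0 ≤ ε := (mul_nonneg (norm_nonneg _) (pow_nonneg hs.le _)).trans (hbound n le_rfl)
  rw [← le_div_iff₀ (by positivity)]
  refine IsUltrametricDist.norm_tsum_le_of_forall_le_of_nonneg (by positivity) fun k => ?_
  rw [le_div_iff₀ (by positivity), norm_mul, norm_pow]
  calc ‖coeff (n + k) F‖ * ‖α‖ ^ k * s ^ n ≤ ‖coeff (n + k) F‖ * s ^ (n + k) := by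
        rw [pow_add, mul_comm (s ^ n), mul_assoc]
        gcongr
    _ ≤ ε := hbound _ (Nat.le_add_right n k)

namespace IsEntirePS

lemma tendsto_norm_tailSum_mul_pow (hF : IsEntirePS F) {α : K} {s : ℝ} (hs : 0 < s)
    (hαs : ‖α‖ ≤ s) : Tendsto (fun n => ‖tailSum F α n‖ * s ^ n) atTop (𝓝 0) := by
  refine tendsto_nhds_zero_of_forall_eventually_le (fun n => by positivity) fun ε hε => ?_
  obtain ⟨N, hN⟩ := ((hF s hs).eventually_le_const hε).exists_forall_of_atTop
  filter_upwards [eventually_ge_atTop N] with n hn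
  exact norm_tailSum_mul_pow_le hs hαs fun m hm => hN m (hn.trans hm)

lemma mk_tailSum_succ (hF : IsEntirePS F) (α : K) :
    IsEntirePS (mk fun n => tailSum F α (n + 1)) := by
  intro r hr
  set s := max r ‖α‖
  have hs : 0 < s := lt_max_of_lt_left hr
  refine squeeze_zero (fun n => by positivity) (fun n => ?_)
    (by simpa using ((hF.tendsto_norm_tailSum_mul_pow hs (le_max_right _ _)).comp
      (tendsto_add_atTop_nat 1)).div_const s)
  rw [coeff_mk, pow_succ, ← mul_assoc, mul_div_cancel_right₀ _ hs.ne']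
  gcongr
  exact le_max_left _ _

variable [CompleteSpace K]

lemma summable_coeff_add_mul_pow (hF : IsEntirePS F) (α : K) (n : ℕ) :
    Summable fun k => coeff (n + k) F * α ^ k := by
  refine NonarchimedeanAddGroup.summable_of_tendsto_cofinite_zero ?_
  rw [Nat.cofinite_eq_atTop, tendsto_zero_iff_norm_tendsto_zero]
  simpa only [norm_mul, norm_pow] using hF.tendsto_norm_coeff_add_mul_pow n (norm_nonneg α)

lemma tailSum_eq_coeff_add_mul (hF : IsEntirePS F) (α : K) (n : ℕ) :
    tailSum F α n = coeff n F + α * tailSum F α (n + 1) := by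
  rw [tailSum, (hF.summable_coeff_add_mul_pow α n).tsum_eq_zero_add, tailSum, ← tsum_mul_left]
  congr 1
  · simp
  · refine tsum_congr fun k => ?_
    rw [pow_succ, show n + (k + 1) = n + 1 + k by omega]
    ring

lemma sub_C_tailSum_eq_X_sub_C_mul (hF : IsEntirePS F) (α : K) :
    F - C (tailSum F α 0) = (X - C α) * mk fun n => tailSum F α (n + 1) := by
  ext (_ | m)
  · simp [sub_mul, hF.tailSum_eq_coeff_add_mul α 0]
  · rw [map_sub, coeff_C, if_neg m.succ_ne_zero, sub_mul, map_sub, coeff_succ_X_mul, coeff_C_mul,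
      coeff_mk, coeff_mk, hF.tailSum_eq_coeff_add_mul α (m + 1)]
    ring

end IsEntirePS

end Tail

section Coprime

variable {K : Type*} [NormedField K] [IsUltrametricDist K] [CompleteSpace K]
  {H : PowerSeries K}

lemma isCoprime_toEntireSeries_X_sub_C (hH : IsEntirePS H) {α : K}
    (hα : ∑' n : ℕ, coeff n H * α ^ n ≠ 0) :
    IsCoprime (Polynomial.X - Polynomial.C α).toEntireSeries (⟨H, hH⟩ : entireSeries K) := by
  have hv : tailSum H α 0 ≠ 0 := by simpa [tailSum] using hα
  set c := (Polynomial.C (tailSum H α 0)⁻¹).toEntireSeries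
  refine ⟨-c * ⟨_, hH.mk_tailSum_succ α⟩, c, Subtype.ext ?_⟩
  have hrem := hH.sub_C_tailSum_eq_X_sub_C_mul α
  have hinv : C (tailSum H α 0)⁻¹ * C (tailSum H α 0) = 1 := by
    rw [← map_mul, inv_mul_cancel₀ hv, map_one]
  simp only [Subring.coe_add, Subring.coe_mul, Subring.coe_neg, Subring.coe_one, c,
    Polynomial.coe_toEntireSeries, Polynomial.coe_sub, Polynomial.coe_X, Polynomial.coe_C]
  linear_combination C (tailSum H α 0)⁻¹ * hrem + hinv

variable [IsAlgClosed K]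

lemma isCoprime_toEntireSeries {Q : Polynomial K} (hQ : Q ≠ 0) (hH : IsEntirePS H)
    (hroots : ∀ α : K, Q.IsRoot α → ∑' n : ℕ, coeff n H * α ^ n ≠ 0) :
    IsCoprime Q.toEntireSeries (⟨H, hH⟩ : entireSeries K) := by
  rw [← Polynomial.C_leadingCoeff_mul_prod_multiset_X_sub_C
    (IsAlgClosed.card_roots_eq_natDegree (p := Q)), map_mul, isCoprime_mul_unit_left_left
    ((Polynomial.isUnit_C.2 (Polynomial.leadingCoeff_ne_zero.2 hQ).isUnit).map _),
    map_multiset_prod, Multiset.map_map]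
  refine Multiset.prod_induction (IsCoprime · _) _ (fun _ _ => IsCoprime.mul_left)
    isCoprime_one_left ?_
  simp only [Multiset.mem_map, Function.comp_apply]
  rintro _ ⟨α, hα, rfl⟩
  exact isCoprime_toEntireSeries_X_sub_C hH (hroots α (Polynomial.isRoot_of_mem_roots hα))

end Coprime

/-- Let `K` be a complete nonarchimedean (algebraically closed) field
and let `Q ∈ K[T]` be a polynomial with constant term `1` (hence invertible leading
coefficient) and `H ∈ K{{T}}` an entire power series.  If `Q` and `H` have no common
root, i.e. `H(α) ≠ 0` for every root `α` of `Q` (the simplified form of the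
nonvanishing of the resultant `Res(Q̃, H)`), then `Q` and `H` generate the unit ideal in
the ring `K{{T}}` of entire series: there are entire `f, g` with `fQ + gH = 1`. -/
theorem stmt_15 {K : Type*} [NormedField K] [CompleteSpace K] [IsUltrametricDist K]
    [IsAlgClosed K]
    (Q : Polynomial K) (hQ0 : Q.coeff 0 = 1)
    (H : PowerSeries K) (hH : IsEntirePS H)
    (hnocommon : ∀ α : K, Q.IsRoot α →
      (∑' n : ℕ, PowerSeries.coeff (R := K) n H * α ^ n) ≠ 0) :
    ∃ f g : PowerSeries K, IsEntirePS f ∧ IsEntirePS g ∧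
      f * (Q : PowerSeries K) + g * H = 1 := by
  have hQ : Q ≠ 0 := fun h => by simp [h] at hQ0
  obtain ⟨f, g, hfg⟩ := isCoprime_toEntireSeries hQ hH hnocommon
  exact ⟨f, g, f.2, g.2, congrArg Subtype.val hfg⟩
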